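/- Let p ≥ 2 be an integer and s ∈ (0, 3/2). If s ∈ (0, 1/2) ∪ (1, 3/2), then t_p(s) < t_{p+1}(s) < 0. If s ∈ (1/2, 1), then t_p(s) > t_{p+1}(s) > 0. If s = 1, then t_p(s) = 0. -/

import Mathlib

/-!
For `p ≥ 2`, `t_p(s)` is the fourth forward difference `Δ⁴ f (p - 2)` of `f y = y ^ β`,
`β = 3 - 2s`, and `t_{p+1}(s) - t_p(s) = Δ⁵ f (p - 2)`. By the mean value theorem and
`(Δᵏ f)' = β Δᵏ (y ^ (β - 1))`, an induction on `k` shows that `Δᵏ f (x)` has the sign of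
`β (β - 1) ⋯ (β - k + 1)` for `x > 0`, and also at `x = 0` (needed for `p = 2`) when
`β ≥ 0`.
For `β = 3 - 2s` these products are `-4s(3 - 2s) · (1 - s)(1 - 2s)` and
`4s(3 - 2s)(1 + 2s) · (1 - s)(1 - 2s)`, so everything is decided by the sign of `(1 - s)(1 - 2s)`.
-/

/-- `t_p(s)`, with the convention `0^(3-2s) = 0` (automatic for `rpow`). -/
noncomputable def tFn (s : ℝ) (p : ℕ) : ℝ :=
  |(p : ℝ) - 2| ^ (3 - 2 * s) - 4 * |(p : ℝ) - 1| ^ (3 - 2 * s) + 6 * (p : ℝ) ^ (3 - 2 * s)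
    - 4 * ((p : ℝ) + 1) ^ (3 - 2 * s) + ((p : ℝ) + 2) ^ (3 - 2 * s)

open fwdDiff Finset

theorem HasDerivAt.fwdDiff_iter {f f' : ℝ → ℝ} {h x : ℝ} (n : ℕ)
    (hf : ∀ j ≤ n, HasDerivAt f (f' (x + j • h)) (x + j • h)) :
    HasDerivAt ((Δ_[h])^[n] f) ((Δ_[h])^[n] f' x) x := by
  have hsum : (Δ_[h])^[n] f = fun y ↦
      ∑ j ∈ range (n + 1), ((-1 : ℤ) ^ (n - j) * n.choose j) • f (y + j • h) :=
    funext (fwdDiff_iter_eq_sum_shift h f n)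
  rw [hsum, fwdDiff_iter_eq_sum_shift]
  refine HasDerivAt.fun_sum fun j hj ↦ ?_
  exact ((hf j (Nat.lt_succ_iff.mp (mem_range.mp hj))).comp_add_const x (j • h)).const_smul
    ((-1 : ℤ) ^ (n - j) * n.choose j)

theorem Continuous.fwdDiff_iter {f : ℝ → ℝ} (hf : Continuous f) (h : ℝ) (n : ℕ) :
    Continuous ((Δ_[h])^[n] f) := by
  induction n with
  | zero => exact hf
  | succ n ih =>
    rw [Function.iterate_succ_apply']
    exact (ih.comp (continuous_add_const h)).sub ih

theorem sign_fwdDiff_eq_of_sign_deriv {g g' : ℝ → ℝ} {x : ℝ} {σ : SignType}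
    (hcont : ContinuousOn g (Set.Icc x (x + 1)))
    (hderiv : ∀ y ∈ Set.Ioo x (x + 1), HasDerivAt g (g' y) y)
    (hsign : ∀ y ∈ Set.Ioo x (x + 1), SignType.sign (g' y) = σ) :
    SignType.sign (Δ_[1] g x) = σ := by
  obtain ⟨c, hc, hslope⟩ := exists_hasDerivAt_eq_slope g g' (lt_add_one x) hcont hderiv
  rw [fwdDiff, ← hsign c hc, hslope, add_sub_cancel_left, div_one]

theorem prod_range_succ_sub_natCast (β : ℝ) (k : ℕ) :
    ∏ i ∈ range (k + 1), (β - i) = β * ∏ i ∈ range k, (β - 1 - i) := by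
  rw [prod_range_succ', mul_comm]
  push_cast
  simp only [sub_zero, sub_add_eq_sub_sub_swap]

theorem sign_fwdDiff_iter_succ_rpow_of_continuousOn {β x : ℝ} (k : ℕ) (hx : 0 ≤ x)
    (hcont : ContinuousOn ((Δ_[1])^[k] (fun y : ℝ ↦ y ^ β)) (Set.Icc x (x + 1)))
    (ih : ∀ y, 0 < y → SignType.sign ((Δ_[1])^[k] (fun y : ℝ ↦ y ^ (β - 1)) y) =
      SignType.sign (∏ i ∈ range k, (β - 1 - i))) :
    SignType.sign ((Δ_[1])^[k + 1] (fun y : ℝ ↦ y ^ β) x) =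
      SignType.sign (∏ i ∈ range (k + 1), (β - i)) := by
  rw [Function.iterate_succ_apply']
  refine sign_fwdDiff_eq_of_sign_deriv (g' := (Δ_[1])^[k] (β • fun y : ℝ ↦ y ^ (β - 1)))
    hcont (fun y hy ↦ HasDerivAt.fwdDiff_iter k fun j _ ↦ ?_) (fun y hy ↦ ?_)
  · have := hx.trans_lt hy.1
    exact Real.hasDerivAt_rpow_const (Or.inl (by positivity))
  · rw [fwdDiff_iter_const_smul, Pi.smul_apply, smul_eq_mul, sign_mul, ih y (hx.trans_lt hy.1),
      prod_range_succ_sub_natCast, sign_mul]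

theorem sign_fwdDiff_iter_rpow (k : ℕ) {β x : ℝ} (hx : 0 < x) :
    SignType.sign ((Δ_[1])^[k] (fun y : ℝ ↦ y ^ β) x) =
      SignType.sign (∏ i ∈ range k, (β - i)) := by
  induction k generalizing β x with
  | zero => simp [Real.rpow_pos_of_pos hx]
  | succ k ih =>
    refine sign_fwdDiff_iter_succ_rpow_of_continuousOn k hx.le (fun y hy ↦ ?_) fun y hy ↦ ih hy
    have hy0 : 0 < y := hx.trans_le hy.1
    exact (HasDerivAt.fwdDiff_iter (f' := fun y ↦ β * y ^ (β - 1)) k fun j _ ↦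
      Real.hasDerivAt_rpow_const (Or.inl (by positivity))).continuousAt.continuousWithinAt

theorem sign_fwdDiff_iter_succ_rpow_of_nonneg (k : ℕ) {β x : ℝ} (hβ : 0 ≤ β)
    (hx : 0 ≤ x) :
    SignType.sign ((Δ_[1])^[k + 1] (fun y : ℝ ↦ y ^ β) x) =
      SignType.sign (∏ i ∈ range (k + 1), (β - i)) :=
  sign_fwdDiff_iter_succ_rpow_of_continuousOn k hx
    ((Real.continuous_rpow_const hβ).fwdDiff_iter 1 k).continuousOn
    fun _ hy ↦ sign_fwdDiff_iter_rpow k hy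

theorem tFn_eq_fwdDiff_iter {p : ℕ} (hp : 2 ≤ p) (s : ℝ) :
    tFn s p = (Δ_[1])^[4] (fun y : ℝ ↦ y ^ (3 - 2 * s)) ((p : ℝ) - 2) := by
  have h2 : (2 : ℝ) ≤ p := by exact_mod_cast hp
  rw [tFn, abs_of_nonneg (by linarith), abs_of_nonneg (by linarith)]
  simp only [Function.iterate_succ_apply', Function.iterate_zero_apply, fwdDiff]
  ring_nf

theorem tFn_succ_sub_tFn_eq_fwdDiff_iter {p : ℕ} (hp : 2 ≤ p) (s : ℝ) :
    tFn s (p + 1) - tFn s p = (Δ_[1])^[5] (fun y : ℝ ↦ y ^ (3 - 2 * s)) ((p : ℝ) - 2) := by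
  rw [Function.iterate_succ_apply' _ 4, fwdDiff, tFn_eq_fwdDiff_iter hp,
    tFn_eq_fwdDiff_iter (by omega),
    show ((p + 1 : ℕ) : ℝ) - 2 = (p : ℝ) - 2 + 1 by push_cast; ring]

theorem sign_tFn {p : ℕ} (hp : 2 ≤ p) {s : ℝ} (hs : s ∈ Set.Ioo (0 : ℝ) (3 / 2)) :
    SignType.sign (tFn s p) = -SignType.sign ((1 - s) * (1 - 2 * s)) := by
  have h2 : (2 : ℝ) ≤ p := by exact_mod_cast hp
  have hprod : ∏ i ∈ range 4, (3 - 2 * s - i) =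
      -(4 * s * (3 - 2 * s) * ((1 - s) * (1 - 2 * s))) := by
    simp only [prod_range_succ, prod_range_zero]
    push_cast
    ring
  have hc : 0 < 4 * s * (3 - 2 * s) := mul_pos (by linarith [hs.1]) (by linarith [hs.2])
  rw [tFn_eq_fwdDiff_iter hp, sign_fwdDiff_iter_succ_rpow_of_nonneg 3 (by linarith [hs.2])
    (by linarith), hprod, Left.sign_neg, sign_mul (4 * s * (3 - 2 * s)), sign_pos hc, one_mul]

theorem sign_tFn_succ_sub_tFn {p : ℕ} (hp : 2 ≤ p) {s : ℝ}
    (hs : s ∈ Set.Ioo (0 : ℝ) (3 / 2)) :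
    SignType.sign (tFn s (p + 1) - tFn s p) = SignType.sign ((1 - s) * (1 - 2 * s)) := by
  have h2 : (2 : ℝ) ≤ p := by exact_mod_cast hp
  have hprod : ∏ i ∈ range 5, (3 - 2 * s - i) =
      4 * s * (3 - 2 * s) * (1 + 2 * s) * ((1 - s) * (1 - 2 * s)) := by
    simp only [prod_range_succ, prod_range_zero]
    push_cast
    ring
  have hc : 0 < 4 * s * (3 - 2 * s) * (1 + 2 * s) :=
    mul_pos (mul_pos (by linarith [hs.1]) (by linarith [hs.2])) (by linarith [hs.1])
  rw [tFn_succ_sub_tFn_eq_fwdDiff_iter hp,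
    sign_fwdDiff_iter_succ_rpow_of_nonneg 4 (by linarith [hs.2]) (by linarith), hprod,
    sign_mul (4 * s * (3 - 2 * s) * (1 + 2 * s)), sign_pos hc, one_mul]

theorem stmt6 (p : ℕ) (hp : 2 ≤ p) (s : ℝ) (hs : s ∈ Set.Ioo (0 : ℝ) (3 / 2)) :
    (s ∈ Set.Ioo (0 : ℝ) (1 / 2) ∪ Set.Ioo (1 : ℝ) (3 / 2) →
      tFn s p < tFn s (p + 1) ∧ tFn s (p + 1) < 0) ∧
    (s ∈ Set.Ioo (1 / 2 : ℝ) 1 → tFn s p > tFn s (p + 1) ∧ tFn s (p + 1) > 0) ∧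
    (s = 1 → tFn s p = 0) := by
  have hsucc := sign_tFn (by omega : 2 ≤ p + 1) hs
  have hdiff := sign_tFn_succ_sub_tFn hp hs
  refine ⟨fun hs' ↦ ?_, fun ⟨hs₁, hs₂⟩ ↦ ?_, fun hs₁ ↦ ?_⟩
  · have hq : 0 < (1 - s) * (1 - 2 * s) := by
      rcases hs' with ⟨_, hs₂⟩ | ⟨hs₁, _⟩
      · exact mul_pos (by linarith) (by linarith)
      · exact mul_pos_of_neg_of_neg (by linarith) (by linarith)
    rw [sign_pos hq] at hsucc hdiff
    exact ⟨sub_pos.mp (sign_eq_one_iff.mp hdiff), sign_eq_neg_one_iff.mp hsucc⟩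
  · have hq : (1 - s) * (1 - 2 * s) < 0 := mul_neg_of_pos_of_neg (by linarith) (by linarith)
    rw [sign_neg hq] at hsucc hdiff
    exact ⟨sub_neg.mp (sign_eq_neg_one_iff.mp hdiff),
      sign_eq_one_iff.mp (hsucc.trans (neg_neg 1))⟩
  · subst hs₁
    have h := sign_tFn hp hs
    rw [sub_self, zero_mul, sign_zero, neg_zero] at h
    exact sign_eq_zero_iff.mp h
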